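/- arXiv:1802.09774 — 2 statements merged into one kernel-verified Lean document; each statement's English description precedes it below -/
import Mathlib

section
/- (Completeness of ranking functions.) Let P be a PARS over A that is strongly almost surely terminating (SAST). Then the function a ↦ adh_P(a) takes finite values and is a ranking function for P with parameter ε = 1; that is, adh_P(a) ≥ 1 + E(adh_P(d)) for every a → d ∈ P. -/
open scoped NNReal ENNReal

/-- A finite (probability) distribution on `A`: a finitely supported weight
function with total weight `1`. -/
structure FinDist (A : Type*) where
  w : A →₀ ℝ≥0
  sum_one : w.sum (fun _ p => p) = 1

/-- Multidistributions on `A`: finite multisets of weighted elements `p:a`. -/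
abbrev MD (A : Type*) := Multiset (ℝ≥0 × A)

namespace MD

/-- The total weight `|μ|` of a multidistribution. -/
def wt {A : Type*} (μ : MD A) : ℝ≥0 := (μ.map Prod.fst).sum

/-- Scalar multiplication `p·μ`. -/
def smul {A : Type*} (p : ℝ≥0) (μ : MD A) : MD A :=
  μ.map fun qa => (p * qa.1, qa.2)

/-- The expected value `E(f(μ)) = Σ_{p:a ∈ μ} p·f(a)`. -/
def exp {A : Type*} (f : A → ℝ≥0) (μ : MD A) : ℝ≥0 :=
  (μ.map fun pa => pa.1 * f pa.2).sum

end MD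

namespace FinDist

/-- The multidistribution associated with a finite distribution. -/
def toMD {A : Type*} (d : FinDist A) : MD A :=
  d.w.support.val.map fun a => (d.w a, a)

/-- The expected value `E(f(d)) = Σ_a d(a)·f(a)`. -/
def exp {A : Type*} (f : A → ℝ≥0) (d : FinDist A) : ℝ≥0 :=
  d.w.sum fun a p => p * f a

/-- Pushforward of a finite distribution along a map; this is
`overline(h(d))`, the collapse of the elementwise image of `d`. -/
noncomputable def map {A B : Type*} (h : A → B) (d : FinDist A) : FinDist B :=
  ⟨Finsupp.mapDomain h d.w, by
    rw [Finsupp.sum_mapDomain_index (fun _ => rfl) (fun _ _ _ => rfl)]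
    exact d.sum_one⟩

/-- The Dirac distribution. -/
noncomputable def dirac {A : Type*} (a : A) : FinDist A :=
  ⟨Finsupp.single a 1, by simp⟩

end FinDist

/-- A PARS over `A`: a set of probabilistic reductions `a → d`. -/
abbrev PARS (A : Type*) := A → FinDist A → Prop

/-- `a` is terminal (a normal form) if it has no reduction. -/
def PARS.Terminal {A : Type*} (P : PARS A) (a : A) : Prop := ∀ d, ¬ P a d

/-- The probabilistic reduction relation `⇒_P` on multidistributions. -/
inductive PARS.Step {A : Type*} (P : PARS A) : MD A → MD A → Prop
  | term (a : A) : P.Terminal a → PARS.Step P {(1, a)} 0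
  | rule (a : A) (d : FinDist A) : P a d → PARS.Step P {(1, a)} d.toMD
  | conv (n : ℕ) (p : Fin n → ℝ≥0) (μ ρ : Fin n → MD A) :
      (∑ i, p i) ≤ 1 → (∀ i, PARS.Step P (μ i) (ρ i)) →
      PARS.Step P (∑ i, MD.smul (p i) (μ i)) (∑ i, MD.smul (p i) (ρ i))

/-- An (infinite) reduction sequence of `P`. -/
def PARS.RedSeq {A : Type*} (P : PARS A) (μs : ℕ → MD A) : Prop :=
  ∀ n, P.Step (μs n) (μs (n + 1))

/-- A reduction sequence of `P` starting from `μ`. -/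
def PARS.RedSeqFrom {A : Type*} (P : PARS A) (μ : MD A) (μs : ℕ → MD A) : Prop :=
  μs 0 = μ ∧ P.RedSeq μs

/-- The expected derivation length `adl(⃗μ) = Σ_{n ≥ 1} |μ_n|`. -/
noncomputable def adl {A : Type*} (μs : ℕ → MD A) : ℝ≥0∞ :=
  ∑' n : ℕ, (MD.wt (μs (n + 1)) : ℝ≥0∞)

/-- The expected derivation height `adh_P(a)`. -/
noncomputable def adh {A : Type*} (P : PARS A) (a : A) : ℝ≥0∞ :=
  ⨆ (μs : ℕ → MD A) (_ : P.RedSeqFrom {(1, a)} μs), adl μs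

/-- Strong almost sure termination. -/
def PARS.SAST {A : Type*} (P : PARS A) : Prop := ∀ a, adh P a < ⊤

/-- Almost sure termination. -/
def PARS.AST {A : Type*} (P : PARS A) : Prop :=
  ∀ μs : ℕ → MD A, P.RedSeq μs →
    Filter.Tendsto (fun n => MD.wt (μs n)) Filter.atTop (nhds 0)

/-- `f` is a (probabilistic) ranking function for `P` with parameter `ε`. -/
def PARS.Ranking {A : Type*} (P : PARS A) (ε : ℝ≥0) (f : A → ℝ≥0) : Prop :=
  ∀ a d, P a d → f a ≥ ε + FinDist.exp f d

section Aux

variable {A : Type*}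

@[simp] lemma MD.wt_zero : MD.wt (0 : MD A) = 0 := rfl

lemma MD.wt_add (μ ν : MD A) : MD.wt (μ + ν) = MD.wt μ + MD.wt ν := by
  simp [MD.wt]

lemma MD.wt_sum {ι : Type*} (s : Finset ι) (f : ι → MD A) :
    MD.wt (∑ i ∈ s, f i) = ∑ i ∈ s, MD.wt (f i) :=
  map_sum (⟨⟨MD.wt, MD.wt_zero⟩, MD.wt_add⟩ : MD A →+ ℝ≥0) f s

lemma MD.wt_smul (p : ℝ≥0) (μ : MD A) : MD.wt (MD.smul p μ) = p * MD.wt μ := by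
  simp only [MD.wt, MD.smul, Multiset.map_map, Function.comp]
  rw [← Multiset.sum_map_mul_left]

@[simp] lemma MD.wt_singleton (p : ℝ≥0) (a : A) : MD.wt ({(p, a)} : MD A) = p := by
  simp [MD.wt]

lemma MD.smul_single (p : ℝ≥0) (a : A) :
    MD.smul p ({(1, a)} : MD A) = ({(p, a)} : MD A) := by
  simp [MD.smul]

lemma FinDist.wt_toMD (d : FinDist A) : MD.wt d.toMD = 1 := by
  have h1 := d.sum_one
  rw [Finsupp.sum] at h1
  rw [MD.wt, FinDist.toMD, Multiset.map_map]
  exact h1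

lemma coe_list_eq (l : List (ℝ≥0 × A)) :
    (↑l : MD A) = ∑ i : Fin l.length, MD.smul l[i.1].1 {(1, l[i.1].2)} := by
  rw [Fin.sum_univ_fun_getElem l (fun x => MD.smul x.1 ({(1, x.2)} : MD A))]
  simp only [MD.smul_single]
  conv_lhs => rw [← Multiset.sum_map_singleton (↑l : MD A)]
  rw [Multiset.map_coe, Multiset.sum_coe]

lemma exists_step (P : PARS A) (μ : MD A) (h : MD.wt μ ≤ 1) :
    ∃ ρ, P.Step μ ρ ∧ MD.wt ρ ≤ 1 := by
  classical
  have hsingle : ∀ b : A, ∃ ρ, P.Step {(1, b)} ρ ∧ MD.wt ρ ≤ 1 := by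
    intro b
    by_cases hb : P.Terminal b
    · exact ⟨0, .term b hb, by simp⟩
    · simp only [PARS.Terminal, not_forall, not_not] at hb
      obtain ⟨d, hd⟩ := hb
      exact ⟨d.toMD, .rule b d hd, le_of_eq d.wt_toMD⟩
  choose g hg hg' using hsingle
  set l := μ.toList with hl
  have hμ : (↑l : MD A) = μ := μ.coe_toList
  have hwt : ∑ i : Fin l.length, l[i.1].1 = MD.wt μ := by
    rw [Fin.sum_univ_fun_getElem l Prod.fst, ← hμ, MD.wt, Multiset.map_coe,
      Multiset.sum_coe]
  refine ⟨∑ i : Fin l.length, MD.smul l[i.1].1 (g l[i.1].2), ?_, ?_⟩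
  · have hstep := PARS.Step.conv (P := P) l.length (fun i => l[i.1].1)
      (fun i => {(1, l[i.1].2)}) (fun i => g l[i.1].2)
      (by rw [hwt]; exact h) (fun i => hg _)
    rwa [← coe_list_eq, hμ] at hstep
  · rw [MD.wt_sum]
    calc ∑ i : Fin l.length, MD.wt (MD.smul l[i.1].1 (g l[i.1].2))
        ≤ ∑ i : Fin l.length, l[i.1].1 := by
          refine Finset.sum_le_sum fun i _ => ?_
          rw [MD.wt_smul]
          calc l[i.1].1 * MD.wt (g l[i.1].2) ≤ l[i.1].1 * 1 :=
                mul_le_mul_right (hg' _) _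
            _ = l[i.1].1 := mul_one _
      _ = MD.wt μ := hwt
      _ ≤ 1 := h

lemma exists_redseq (P : PARS A) (a : A) : ∃ μs, P.RedSeqFrom {(1, a)} μs := by
  classical
  have hstep : ∀ μ : {μ : MD A // MD.wt μ ≤ 1},
      ∃ ρ : {μ : MD A // MD.wt μ ≤ 1}, P.Step μ.1 ρ.1 := by
    rintro ⟨μ, hμ⟩
    obtain ⟨ρ, h1, h2⟩ := exists_step P μ hμ
    exact ⟨⟨ρ, h2⟩, h1⟩
  choose F hF using hstep
  refine ⟨fun n => (F^[n] ⟨{(1, a)}, by simp⟩).1, rfl, fun n => ?_⟩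
  show P.Step (F^[n] _).1 (F^[n + 1] _).1
  rw [Function.iterate_succ_apply']
  exact hF _

lemma key_ineq (P : PARS A) (h : P.SAST) (a : A) (d : FinDist A) (had : P a d) :
    1 + ∑ b ∈ d.w.support, (d.w b : ℝ≥0∞) * adh P b ≤ adh P a := by
  classical
  refine ENNReal.le_of_forall_pos_le_add fun ε hε _ => ?_
  have hch : ∀ b : A, ∃ μs, P.RedSeqFrom {(1, b)} μs ∧ adh P b ≤ adl μs + ε := by
    intro b
    by_cases hb : adh P b ≤ ε
    · obtain ⟨μs, hμs⟩ := exists_redseq P b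
      exact ⟨μs, hμs, hb.trans (le_add_self)⟩
    · push_neg at hb
      have h1 : adh P b - ε < adh P b :=
        ENNReal.sub_lt_self (h b).ne (lt_of_le_of_lt zero_le hb).ne'
          (by exact_mod_cast hε.ne')
      rw [adh, lt_iSup_iff] at h1
      obtain ⟨μs, h1⟩ := h1
      rw [lt_iSup_iff] at h1
      obtain ⟨hμs, h1⟩ := h1
      exact ⟨μs, hμs, ((ENNReal.sub_lt_iff_lt_right (by simp) hb.le).1 h1).le⟩
  choose μs hseq happ using hch
  obtain ⟨n, b, p, hbp, hsum_eq1, hsum_eq2, hsum_eq3⟩ :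
      ∃ (n : ℕ) (b : Fin n → A) (p : Fin n → ℝ≥0),
        (∀ i, p i = d.w (b i)) ∧
        (∑ i, p i = ∑ x ∈ d.w.support, d.w x) ∧
        (∑ i, ({(p i, b i)} : MD A) = ∑ x ∈ d.w.support, ({(d.w x, x)} : MD A)) ∧
        (∑ i, (p i : ℝ≥0∞) * adh P (b i)
          = ∑ x ∈ d.w.support, (d.w x : ℝ≥0∞) * adh P x) := by
    refine ⟨d.w.support.card, fun i => (d.w.support.equivFin.symm i : A),
      fun i => d.w (d.w.support.equivFin.symm i : A), fun i => rfl, ?_, ?_, ?_⟩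
    · rw [← Finset.sum_coe_sort d.w.support d.w]
      exact Fintype.sum_equiv d.w.support.equivFin.symm _ _ (fun i => rfl)
    · rw [← Finset.sum_coe_sort d.w.support (fun x => ({(d.w x, x)} : MD A))]
      exact Fintype.sum_equiv d.w.support.equivFin.symm _ _ (fun i => rfl)
    · rw [← Finset.sum_coe_sort d.w.support (fun x => (d.w x : ℝ≥0∞) * adh P x)]
      exact Fintype.sum_equiv d.w.support.equivFin.symm _ _ (fun i => rfl)
  have hp1 : ∑ i, p i = 1 := by
    rw [hsum_eq1]
    have := d.sum_one
    rwa [Finsupp.sum] at this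
  set ν : ℕ → MD A := fun k =>
    Nat.casesOn k ({(1, a)} : MD A) (fun k => ∑ i, MD.smul (p i) (μs (b i) k))
    with hν
  have hν0 : ν 0 = ({(1, a)} : MD A) := rfl
  have hνs : ∀ k, ν (k + 1) = ∑ i, MD.smul (p i) (μs (b i) k) := fun k => rfl
  have hstep0 : d.toMD = ν 1 := by
    show d.toMD = ∑ i, MD.smul (p i) (μs (b i) 0)
    have hms : ∀ i, μs (b i) 0 = ({(1, b i)} : MD A) := fun i => (hseq (b i)).1
    simp only [hms, MD.smul_single]
    rw [hsum_eq2, FinDist.toMD, Finset.sum]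
    rw [show (fun x : A => ({(d.w x, x)} : MD A)) =
      (fun y => ({y} : MD A)) ∘ (fun x : A => ((d.w x, x) : ℝ≥0 × A)) from rfl]
    rw [← Multiset.map_map, Multiset.sum_map_singleton]
  have hred : P.RedSeqFrom {(1, a)} ν := by
    refine ⟨rfl, fun k => ?_⟩
    cases k with
    | zero =>
      show P.Step (ν 0) (ν 1)
      rw [hν0, ← hstep0]
      exact .rule a d had
    | succ k =>
      show P.Step (∑ i, MD.smul (p i) (μs (b i) k))
        (∑ i, MD.smul (p i) (μs (b i) (k + 1)))
      exact PARS.Step.conv n p (fun i => μs (b i) k) (fun i => μs (b i) (k + 1))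
        (le_of_eq hp1) (fun i => (hseq (b i)).2 k)
  have hadl : adl ν = 1 + ∑ i, (p i : ℝ≥0∞) * adl (μs (b i)) := by
    have hterm : ∀ k, (MD.wt (ν (k + 1)) : ℝ≥0∞)
        = ∑ i, (p i : ℝ≥0∞) * (MD.wt (μs (b i) k) : ℝ≥0∞) := by
      intro k
      rw [hνs k, MD.wt_sum, ENNReal.coe_finset_sum]
      refine Finset.sum_congr rfl fun i _ => ?_
      rw [MD.wt_smul, ENNReal.coe_mul]
    rw [adl]
    simp_rw [hterm]
    rw [Summable.tsum_finsetSum (fun i _ => ENNReal.summable)]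
    have hinner : ∀ i : Fin n, ∑' k : ℕ, (p i : ℝ≥0∞) * (MD.wt (μs (b i) k) : ℝ≥0∞)
        = (p i : ℝ≥0∞) * (1 + adl (μs (b i))) := by
      intro i
      rw [ENNReal.tsum_mul_left]
      congr 1
      rw [tsum_eq_zero_add' ENNReal.summable, (hseq (b i)).1]
      simp [adl]
    simp_rw [hinner, mul_add, mul_one]
    rw [Finset.sum_add_distrib]
    congr 1
    rw [← ENNReal.coe_finset_sum, hp1, ENNReal.coe_one]
  have hle : adl ν ≤ adh P a := le_iSup₂ (f := fun μs _ => adl μs) ν hred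
  calc 1 + ∑ x ∈ d.w.support, (d.w x : ℝ≥0∞) * adh P x
      = 1 + ∑ i, (p i : ℝ≥0∞) * adh P (b i) := by rw [hsum_eq3]
    _ ≤ 1 + ∑ i, (p i : ℝ≥0∞) * (adl (μs (b i)) + ε) := by
        gcongr with i
        exact happ (b i)
    _ = (1 + ∑ i, (p i : ℝ≥0∞) * adl (μs (b i))) + ∑ i, (p i : ℝ≥0∞) * ε := by
        simp_rw [mul_add]
        rw [Finset.sum_add_distrib]
        ring
    _ = adl ν + ε := by
        rw [← hadl, ← Finset.sum_mul, ← ENNReal.coe_finset_sum, hp1]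
        simp
    _ ≤ adh P a + ε := by gcongr

end Aux

/-- completeness of ranking functions: if `P` is SAST then
`adh_P` is finite-valued and is a ranking function with parameter `ε = 1`. -/
theorem stmt_5 {A : Type*} [Countable A] (P : PARS A) (h : P.SAST) :
    (∀ a : A, adh P a ≠ ⊤) ∧
    P.Ranking 1 (fun a => (adh P a).toNNReal) := by
  refine ⟨fun a => (h a).ne, fun a d had => ?_⟩
  have hkey := key_ineq P h a d had
  have hne : ∀ b, adh P b ≠ ⊤ := fun b => (h b).ne
  have hcoe : ((1 + FinDist.exp (fun a => (adh P a).toNNReal) d : ℝ≥0) : ℝ≥0∞)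
      = 1 + ∑ b ∈ d.w.support, (d.w b : ℝ≥0∞) * adh P b := by
    rw [FinDist.exp, Finsupp.sum]
    push_cast
    congr 1
    refine Finset.sum_congr rfl fun x _ => ?_
    rw [ENNReal.coe_toNNReal (hne x)]
  have : ((1 + FinDist.exp (fun a => (adh P a).toNNReal) d : ℝ≥0) : ℝ≥0∞)
      ≤ ((adh P a).toNNReal : ℝ≥0∞) := by
    rw [hcoe, ENNReal.coe_toNNReal (hne a)]
    exact hkey
  exact_mod_cast this
end

section
/- Let A be the PARS over the disjoint union ℕ ⊎ {a_n | n ∈ ℕ} whose probabilistic reductions are exactly: a_n → ⟨1/2 : a_{n+1}; 1/2 : 0⟩, a_n → ⟨1 : 2^n · n⟩, and n+1 → ⟨1 : n⟩, for every n ∈ ℕ (where k denotes the element of the ℕ-component). Then A is positively almost surely terminating (PAST), every element has only finitely many one-step reducts (A is finitely branching), but A is not strongly almost surely terminating: adh_A(a_0) = ∞. -/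
open scoped NNReal ENNReal

/-!
At `a_n` one may bet (move on to `a_{n+1}` or stop at `0`, with probability `1/2` each) or cash
out, which leaves `2^n·n` steps to go. Along a reduction sequence the mass on the `a_n` halves at
every step. The number of entries `p:a_n` never grows and drops whenever one of them cashes out,
so cashing out happens at only finitely many steps. At all other steps the expected value of the
numbers is a potential that pays for the mass on the numbers and is replenished only by the
(summable) mass on the `a_n`; hence every reduction sequence has finite expected length, although
the bound depends on when it cashes out. Betting `k` times from `a_0` and then cashing out puts
mass `2⁻ᵏ` on a countdown of length `2^k·k`, so `adh(a_0) ≥ k` for every `k`.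
-/

namespace MD

variable {A : Type*}

@[simp]
lemma exp_zero (f : A → ℝ≥0) : exp f 0 = 0 := rfl

@[simp]
lemma exp_add (f : A → ℝ≥0) (μ ν : MD A) : exp f (μ + ν) = exp f μ + exp f ν := by
  simp [exp]

@[simp]
lemma exp_singleton (f : A → ℝ≥0) (p : ℝ≥0) (a : A) : exp f {(p, a)} = p * f a := by
  simp [exp]

@[simp]
lemma exp_cons (f : A → ℝ≥0) (pa : ℝ≥0 × A) (μ : MD A) :
    exp f (pa ::ₘ μ) = pa.1 * f pa.2 + exp f μ := by
  simp [exp]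

@[simp]
lemma exp_smul (f : A → ℝ≥0) (p : ℝ≥0) (μ : MD A) : exp f (smul p μ) = p * exp f μ := by
  simp [exp, smul, Multiset.map_map, mul_assoc, Multiset.sum_map_mul_left]

lemma exp_add_fun (f g : A → ℝ≥0) (μ : MD A) : exp (f + g) μ = exp f μ + exp g μ := by
  simp [exp, mul_add, Multiset.sum_map_add]

lemma exp_const_mul (c : ℝ≥0) (f : A → ℝ≥0) (μ : MD A) :
    exp (fun a => c * f a) μ = c * exp f μ := by
  simp [exp, mul_left_comm _ c, Multiset.sum_map_mul_left]

lemma exp_sum (f : A → ℝ≥0) {n : ℕ} (μ : Fin n → MD A) :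
    exp f (∑ i, μ i) = ∑ i, exp f (μ i) :=
  map_sum (⟨⟨exp f, exp_zero f⟩, exp_add f⟩ : MD A →+ ℝ≥0) μ Finset.univ

lemma wt_eq_exp (μ : MD A) : wt μ = exp 1 μ := by
  simp [wt, exp]

@[simp]
lemma smul_singleton (p q : ℝ≥0) (a : A) : smul p {(q, a)} = {(p * q, a)} := by
  simp [smul]

/-- Entries of weight `0` count as well. -/
def count (s : A → Prop) [DecidablePred s] (μ : MD A) : ℕ :=
  μ.countP fun pa => s pa.2

variable (s : A → Prop) [DecidablePred s]

@[simp]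
lemma count_zero : count s 0 = 0 := rfl

@[simp]
lemma count_add (μ ν : MD A) : count s (μ + ν) = count s μ + count s ν :=
  Multiset.countP_add _ μ ν

@[simp]
lemma count_cons (pa : ℝ≥0 × A) (μ : MD A) :
    count s (pa ::ₘ μ) = count s μ + if s pa.2 then 1 else 0 :=
  Multiset.countP_cons _ _ _

@[simp]
lemma count_singleton (pa : ℝ≥0 × A) : count s {pa} = if s pa.2 then 1 else 0 := by
  simp [← Multiset.cons_zero]

@[simp]
lemma count_smul (p : ℝ≥0) (μ : MD A) : count s (smul p μ) = count s μ := by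
  rw [count, smul, Multiset.countP_map, count, Multiset.countP_eq_card_filter]

lemma count_sum {n : ℕ} (μ : Fin n → MD A) : count s (∑ i, μ i) = ∑ i, count s (μ i) :=
  map_sum (⟨⟨count s, count_zero s⟩, count_add s⟩ : MD A →+ ℕ) μ Finset.univ

end MD

namespace FinDist

variable {A : Type*}

@[ext]
lemma ext {d e : FinDist A} (h : d.w = e.w) : d = e := by
  cases d; cases e; simpa using h

lemma dirac_w [DecidableEq A] (b y : A) : (dirac b).w y = if y = b then 1 else 0 := by
  simp [dirac, Finsupp.single_apply, eq_comm]

lemma toMD_of_w_eq_ite [DecidableEq A] {d : FinDist A} {b : A} (h : ∀ y, d.w y = if y = b then 1 else 0) :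
    d.toMD = {(1, b)} := by
  have hw : d.w = Finsupp.single b 1 := by
    ext y; simp [h, Finsupp.single_apply, eq_comm]
  simp [toMD, hw]

noncomputable def coin (b c : A) : FinDist A :=
  ⟨Finsupp.single b (1 / 2) + Finsupp.single c (1 / 2), by
    rw [Finsupp.sum_add_index' (fun _ => rfl) (fun _ _ _ => rfl)]
    norm_num⟩

lemma coin_w [DecidableEq A] {b c : A} (hbc : b ≠ c) (y : A) :
    (coin b c).w y = if y = b then 1 / 2 else if y = c then 1 / 2 else 0 := by
  by_cases hb : y = b
  · subst hb; simp [coin, hbc]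
  · by_cases hc : y = c
    · subst hc; simp [coin, hb]
    · simp [coin, hb, hc]

lemma toMD_of_w_eq_ite_ite [DecidableEq A] {d : FinDist A} {b c : A} {p q : ℝ≥0} (hbc : b ≠ c) (hp : p ≠ 0)
    (hq : q ≠ 0) (h : ∀ y, d.w y = if y = b then p else if y = c then q else 0) :
    d.toMD = {(p, b), (q, c)} := by
  have hsupp : d.w.support = {b, c} := by
    ext y
    by_cases hb : y = b
    · simp [h, hb, hp]
    · by_cases hc : y = c <;> simp [h, hb, hc, hq, hbc.symm]
  rw [toMD, hsupp, Finset.insert_val_of_notMem (by simpa using hbc)]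
  simp [h, Ne.symm hbc]

end FinDist

def MD.consSeq {A : Type*} (μ : MD A) (μs : ℕ → MD A) : ℕ → MD A
  | 0 => μ
  | t + 1 => μs t

namespace PARS

variable {A : Type*} {P : PARS A} {μs νs : ℕ → MD A}

lemma Step.zero : P.Step 0 0 := by
  simpa using Step.conv (P := P) 0 Fin.elim0 Fin.elim0 Fin.elim0 (by simp) (fun i => i.elim0)

lemma Step.smul_add_smul {μ₁ ρ₁ μ₂ ρ₂ : MD A} {p q : ℝ≥0} (hpq : p + q ≤ 1)
    (h₁ : P.Step μ₁ ρ₁) (h₂ : P.Step μ₂ ρ₂) :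
    P.Step (MD.smul p μ₁ + MD.smul q μ₂) (MD.smul p ρ₁ + MD.smul q ρ₂) := by
  simpa [Fin.sum_univ_two] using Step.conv (P := P) 2 ![p, q] ![μ₁, μ₂] ![ρ₁, ρ₂]
    (by simpa [Fin.sum_univ_two] using hpq) (by intro i; fin_cases i <;> assumption)

lemma Step.exp_le_exp {f g : A → ℝ≥0} (hrule : ∀ a d, P a d → MD.exp f d.toMD ≤ g a)
    {μ ρ : MD A} (h : P.Step μ ρ) : MD.exp f ρ ≤ MD.exp g μ := by
  induction h with
  | term a _ => simp
  | rule a d hd => simpa using hrule a d hd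
  | conv n p μ ρ _ _ ih =>
    simp only [MD.exp_sum, MD.exp_smul]
    exact Finset.sum_le_sum fun i _ => mul_le_mul_right (ih i) _

lemma RedSeq.consSeq {μ : MD A} (hμ : P.Step μ (μs 0)) (hs : P.RedSeq μs) :
    P.RedSeq (MD.consSeq μ μs) := by
  rintro (_ | t)
  exacts [hμ, hs t]

lemma RedSeq.smul_add_smul {p q : ℝ≥0} (hpq : p + q ≤ 1) (hμ : P.RedSeq μs) (hν : P.RedSeq νs) :
    P.RedSeq fun t => MD.smul p (μs t) + MD.smul q (νs t) :=
  fun t => Step.smul_add_smul hpq (hμ t) (hν t)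

lemma RedSeq.zero : P.RedSeq 0 := fun _ => Step.zero

variable (s : A → Prop) [DecidablePred s]
  (hrule : ∀ a d, P a d → MD.count s d.toMD ≤ MD.count s {(1, a)})
include hrule

lemma Step.count_le {μ ρ : MD A} (h : P.Step μ ρ) : MD.count s ρ ≤ MD.count s μ := by
  induction h with
  | term a _ => simp
  | rule a d hd => exact hrule a d hd
  | conv n p μ ρ _ _ ih =>
    simp only [MD.count_sum, MD.count_smul]
    exact Finset.sum_le_sum fun i _ => ih i

lemma Step.of_count_eq {μ ρ : MD A} (h : P.Step μ ρ) (hc : MD.count s ρ = MD.count s μ) :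
    Step (fun a d => P a d ∧ MD.count s d.toMD = MD.count s {(1, a)}) μ ρ := by
  induction h with
  | term a ha => exact Step.term a fun d hd => ha d hd.1
  | rule a d hd => exact Step.rule a d ⟨hd, hc⟩
  | conv n p μ ρ hp hsteps ih =>
    simp only [MD.count_sum, MD.count_smul] at hc
    have hle i (_ : i ∈ Finset.univ) := (hsteps i).count_le s hrule
    exact Step.conv n p μ ρ hp fun i =>
      ih i ((Finset.sum_eq_sum_iff_of_le hle).1 hc i (Finset.mem_univ i))

end PARS

section adl

variable {A : Type*}

@[simp]
lemma adl_zero : adl (0 : ℕ → MD A) = 0 := by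
  simp [adl, MD.wt]

lemma adl_consSeq (μ : MD A) (μs : ℕ → MD A) :
    adl (MD.consSeq μ μs) = MD.wt (μs 0) + adl μs := by
  simp only [adl, MD.consSeq]
  exact tsum_eq_zero_add' ENNReal.summable

lemma adl_smul_add_smul (p q : ℝ≥0) (μs νs : ℕ → MD A) :
    adl (fun t => MD.smul p (μs t) + MD.smul q (νs t)) = p * adl μs + q * adl νs := by
  simp only [adl, MD.wt_eq_exp, MD.exp_add, MD.exp_smul, ENNReal.coe_add, ENNReal.coe_mul]
  rw [ENNReal.tsum_add, ENNReal.tsum_mul_left, ENNReal.tsum_mul_left]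

end adl

lemma NNReal.summable_of_potential {V N c : ℕ → ℝ≥0} (hc : Summable c)
    (h : ∀ t, V (t + 1) + N t ≤ V t + c t) : Summable N := by
  have hpartial (T : ℕ) : ∑ t ∈ Finset.range T, N t + V T ≤ V 0 + ∑ t ∈ Finset.range T, c t := by
    induction T with
    | zero => simp
    | succ T ih =>
      simp only [Finset.sum_range_succ]
      calc _ = ∑ t ∈ Finset.range T, N t + (V (T + 1) + N T) := by ring
        _ ≤ ∑ t ∈ Finset.range T, N t + (V T + c T) := add_le_add le_rfl (h T)
        _ ≤ _ := by linear_combination ih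
  refine NNReal.summable_of_sum_range_le (c := V 0 + ∑' t, c t) fun T => ?_
  calc _ ≤ ∑ t ∈ Finset.range T, N t + V T := le_self_add
    _ ≤ _ := (hpartial T).trans (add_le_add le_rfl (hc.sum_le_tsum _ fun _ _ => zero_le))

lemma Antitone.finite_setOf_lt_succ {f : ℕ → ℕ} (hf : Antitone f) :
    {t | f (t + 1) < f t}.Finite := by
  obtain ⟨n, hn⟩ := WellFoundedLT.antitone_chain_condition hf
  refine (Set.finite_Iio n).subset fun t ht => ?_
  by_contra hnt
  have hnt : n ≤ t := not_lt.1 hnt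
  simp [← hn t hnt, ← hn (t + 1) (by omega)] at ht

/-- `Sum.inl k` is the number `k` and `Sum.inr n` the element `a_n`. -/
def PARS.IsGambling (P : PARS (ℕ ⊕ ℕ)) : Prop :=
  ∀ (a : ℕ ⊕ ℕ) (d : FinDist (ℕ ⊕ ℕ)), P a d ↔
    (∃ n : ℕ, a = Sum.inr n ∧ ∀ y, d.w y =
      if y = Sum.inr (n + 1) then 1 / 2 else if y = Sum.inl 0 then 1 / 2 else 0) ∨
    (∃ n : ℕ, a = Sum.inr n ∧ ∀ y, d.w y =
      if y = Sum.inl (2 ^ n * n) then 1 else 0) ∨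
    (∃ n : ℕ, a = Sum.inl (n + 1) ∧ ∀ y, d.w y =
      if y = Sum.inl n then 1 else 0)

namespace Gambling

def numberValue : ℕ ⊕ ℕ → ℝ≥0 := Sum.elim (↑) 0

def numberMass : ℕ ⊕ ℕ → ℝ≥0 := Sum.elim 1 0

def betMass : ℕ ⊕ ℕ → ℝ≥0 := Sum.elim 0 1

def cashOutValue : ℕ ⊕ ℕ → ℝ≥0 := Sum.elim 0 fun n => 2 ^ n * n

def betCount (μ : MD (ℕ ⊕ ℕ)) : ℕ := MD.count (fun x => x.isRight) μ

lemma wt_eq (μ : MD (ℕ ⊕ ℕ)) : μ.wt = MD.exp numberMass μ + MD.exp betMass μ := by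
  rw [MD.wt_eq_exp, ← MD.exp_add_fun]
  congr 1
  ext (_ | _) <;> simp [numberMass, betMass]

def countdown : ℕ → ℕ → MD (ℕ ⊕ ℕ)
  | 0 => MD.consSeq {(1, .inl 0)} 0
  | m + 1 => MD.consSeq {(1, .inl (m + 1))} (countdown m)

/-- `gamble n k` starts at `a_n`, bets `k` times and then cashes out. -/
noncomputable def gamble : ℕ → ℕ → ℕ → MD (ℕ ⊕ ℕ)
  | n, 0 => MD.consSeq {(1, .inr n)} (countdown (2 ^ n * n))
  | n, k + 1 => MD.consSeq {(1, .inr n)}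
      fun t => MD.smul (1 / 2) (gamble (n + 1) k t) + MD.smul (1 / 2) (countdown 0 t)

@[simp]
lemma countdown_zero (m : ℕ) : countdown m 0 = {(1, .inl m)} := by
  cases m <;> rfl

@[simp]
lemma gamble_zero (n k : ℕ) : gamble n k 0 = {(1, .inr n)} := by
  cases k <;> rfl

lemma adl_countdown (m : ℕ) : adl (countdown m) = m := by
  induction m with
  | zero => simp [countdown, adl_consSeq, MD.wt]
  | succ m ih => simp [countdown, adl_consSeq, ih, MD.wt, add_comm]

/-- After `k` bets the mass `2⁻ᵏ` cashes out `2^(n+k)·(n+k)` steps. -/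
lemma le_adl_gamble (n k : ℕ) : ((2 ^ n * (n + k) : ℕ) : ℝ≥0∞) ≤ adl (gamble n k) := by
  induction k generalizing n with
  | zero => simp [gamble, adl_consSeq, adl_countdown]
  | succ k ih =>
    have h2 : ((2 ^ (n + 1) * (n + 1 + k) : ℕ) : ℝ≥0∞) = 2 * (2 ^ n * (n + (k + 1)) : ℕ) := by
      push_cast; ring
    calc ((2 ^ n * (n + (k + 1)) : ℕ) : ℝ≥0∞)
        = (1 / 2 : ℝ≥0) * ((2 ^ (n + 1) * (n + 1 + k) : ℕ) : ℝ≥0∞) := by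
          rw [h2, ← mul_assoc]
          norm_num [ENNReal.inv_mul_cancel]
      _ ≤ (1 / 2 : ℝ≥0) * adl (gamble (n + 1) k) := by gcongr; exact ih (n + 1)
      _ ≤ _ := by
        rw [gamble, adl_consSeq, adl_smul_add_smul]
        exact le_add_left le_self_add

end Gambling

namespace PARS.IsGambling

open Gambling

variable {P : PARS (ℕ ⊕ ℕ)} (hP : P.IsGambling)
include hP

lemma toMD_of_rule {a : ℕ ⊕ ℕ} {d : FinDist (ℕ ⊕ ℕ)} (hd : P a d) :
    (∃ n, a = .inr n ∧ d.toMD = {(1 / 2, .inr (n + 1)), (1 / 2, .inl 0)}) ∨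
    (∃ n, a = .inr n ∧ d.toMD = {(1, .inl (2 ^ n * n))}) ∨
    (∃ n, a = .inl (n + 1) ∧ d.toMD = {(1, .inl n)}) := by
  rcases (hP a d).1 hd with ⟨n, rfl, hw⟩ | ⟨n, rfl, hw⟩ | ⟨n, rfl, hw⟩
  · exact .inl ⟨n, rfl, FinDist.toMD_of_w_eq_ite_ite (by simp) (by simp) (by simp) hw⟩
  · exact .inr <| .inl ⟨n, rfl, FinDist.toMD_of_w_eq_ite hw⟩
  · exact .inr <| .inr ⟨n, rfl, FinDist.toMD_of_w_eq_ite hw⟩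

lemma step_bet (n : ℕ) : P.Step {(1, .inr n)} {(1 / 2, .inr (n + 1)), (1 / 2, .inl 0)} := by
  have hbc : (Sum.inr (n + 1) : ℕ ⊕ ℕ) ≠ .inl 0 := by simp
  have hw := FinDist.coin_w hbc
  rw [← FinDist.toMD_of_w_eq_ite_ite hbc (by simp) (by simp) hw]
  exact Step.rule _ _ ((hP _ _).2 (.inl ⟨n, rfl, hw⟩))

lemma step_cashOut (n : ℕ) : P.Step {(1, .inr n)} {(1, .inl (2 ^ n * n))} := by
  have hw := FinDist.dirac_w (Sum.inl (2 ^ n * n) : ℕ ⊕ ℕ)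
  rw [← FinDist.toMD_of_w_eq_ite hw]
  exact Step.rule _ _ ((hP _ _).2 (.inr <| .inl ⟨n, rfl, hw⟩))

lemma step_pred (n : ℕ) : P.Step {(1, .inl (n + 1))} {(1, .inl n)} := by
  have hw := FinDist.dirac_w (Sum.inl n : ℕ ⊕ ℕ)
  rw [← FinDist.toMD_of_w_eq_ite hw]
  exact Step.rule _ _ ((hP _ _).2 (.inr <| .inr ⟨n, rfl, hw⟩))

lemma step_terminal : P.Step {(1, .inl 0)} 0 :=
  Step.term _ fun d hd => by
    rcases (hP _ d).1 hd with ⟨_, h, _⟩ | ⟨_, h, _⟩ | ⟨_, h, _⟩ <;> simp at h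

lemma finite_setOf (a : ℕ ⊕ ℕ) : {d | P a d}.Finite := by
  have hsub {ι : Type} (c : ι → ℕ ⊕ ℕ) (hc : c.Injective) (F : ι → ℕ ⊕ ℕ → ℝ≥0) :
      {d : FinDist (ℕ ⊕ ℕ) | ∃ i, a = c i ∧ ∀ y, d.w y = F i y}.Subsingleton := by
    rintro d ⟨i, rfl, hd⟩ e ⟨j, hij, he⟩
    obtain rfl := hc hij
    ext y
    rw [hd, he]
  refine Set.Finite.subset ?_ fun d hd => (hP a d).1 hd
  exact (hsub _ Sum.inr_injective _).finite.union
    ((hsub _ Sum.inr_injective _).finite.union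
      (hsub _ (Sum.inl_injective.comp Nat.succ_injective) _).finite)

lemma betCount_le {μ ρ : MD (ℕ ⊕ ℕ)} (h : P.Step μ ρ) : betCount ρ ≤ betCount μ := by
  refine h.count_le _ fun a d hd => ?_
  rcases hP.toMD_of_rule hd with ⟨n, rfl, hdμ⟩ | ⟨n, rfl, hdμ⟩ | ⟨n, rfl, hdμ⟩ <;>
    simp [hdμ]

lemma exp_betMass_le {μ ρ : MD (ℕ ⊕ ℕ)} (h : P.Step μ ρ) :
    MD.exp betMass ρ ≤ 2⁻¹ * MD.exp betMass μ := by
  rw [← MD.exp_const_mul]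
  refine h.exp_le_exp fun a d hd => ?_
  rcases hP.toMD_of_rule hd with ⟨n, rfl, hdμ⟩ | ⟨n, rfl, hdμ⟩ | ⟨n, rfl, hdμ⟩ <;>
    simp [hdμ, betMass]

lemma exp_number_le {μ ρ : MD (ℕ ⊕ ℕ)} (h : P.Step μ ρ) :
    MD.exp (numberValue + numberMass) ρ ≤ MD.exp (numberValue + cashOutValue + betMass) μ := by
  refine h.exp_le_exp fun a d hd => ?_
  rcases hP.toMD_of_rule hd with ⟨n, rfl, hdμ⟩ | ⟨n, rfl, hdμ⟩ | ⟨n, rfl, hdμ⟩ <;>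
    simp [hdμ, numberValue, numberMass, betMass, cashOutValue]
  bound

lemma exp_number_le_of_betCount_eq {μ ρ : MD (ℕ ⊕ ℕ)} (h : P.Step μ ρ)
    (hc : betCount ρ = betCount μ) :
    MD.exp (numberValue + numberMass) ρ ≤ MD.exp (numberValue + betMass) μ := by
  refine (h.of_count_eq _ (fun a d hd => hP.betCount_le (.rule a d hd)) hc).exp_le_exp ?_
  rintro a d ⟨hd, hcd⟩
  rcases hP.toMD_of_rule hd with ⟨n, rfl, hdμ⟩ | ⟨n, rfl, hdμ⟩ | ⟨n, rfl, hdμ⟩ <;>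
    simp_all [numberValue, numberMass, betMass]

lemma exp_number_le_add_ite {μ ρ : MD (ℕ ⊕ ℕ)} (h : P.Step μ ρ) :
    MD.exp numberValue ρ + MD.exp numberMass ρ ≤ MD.exp numberValue μ + MD.exp betMass μ +
      if betCount ρ < betCount μ then MD.exp cashOutValue μ else 0 := by
  simp only [← MD.exp_add_fun]
  split_ifs with hlt
  · calc _ ≤ _ := hP.exp_number_le h
      _ = _ := by simp only [MD.exp_add_fun]; ring
  · rw [add_zero]
    exact hP.exp_number_le_of_betCount_eq h ((hP.betCount_le h).antisymm (not_lt.1 hlt))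

lemma exp_betMass_le_pow {μs : ℕ → MD (ℕ ⊕ ℕ)} (hμs : P.RedSeq μs) (t : ℕ) :
    MD.exp betMass (μs t) ≤ MD.exp betMass (μs 0) * 2⁻¹ ^ t := by
  induction t with
  | zero => simp
  | succ t ih =>
    calc _ ≤ 2⁻¹ * MD.exp betMass (μs t) := hP.exp_betMass_le (hμs t)
      _ ≤ 2⁻¹ * (MD.exp betMass (μs 0) * 2⁻¹ ^ t) := by gcongr
      _ = _ := by ring

lemma summable_wt {μs : ℕ → MD (ℕ ⊕ ℕ)} (hμs : P.RedSeq μs) :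
    Summable fun t => (μs (t + 1)).wt := by
  have hbet : Summable fun t => MD.exp betMass (μs t) :=
    NNReal.summable_of_le (hP.exp_betMass_le_pow hμs)
      ((NNReal.summable_geometric (by norm_num)).mul_left _)
  have hdrops : {t | betCount (μs (t + 1)) < betCount (μs t)}.Finite :=
    Antitone.finite_setOf_lt_succ (f := fun t => betCount (μs t))
      (antitone_nat_of_succ_le fun t => hP.betCount_le (hμs t))
  have hcash : Summable fun t =>
      if betCount (μs (t + 1)) < betCount (μs t) then MD.exp cashOutValue (μs t) else 0 :=
    summable_of_hasFiniteSupport <| hdrops.subset fun t ht => by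
      by_contra hnt
      exact ht (if_neg hnt)
  have hnum : Summable fun t => MD.exp numberMass (μs (t + 1)) :=
    NNReal.summable_of_potential (V := fun t => MD.exp numberValue (μs t)) (hbet.add hcash)
      fun t => by simpa [add_assoc] using hP.exp_number_le_add_ite (hμs t)
  simpa only [wt_eq] using hnum.add ((NNReal.summable_nat_add_iff 1).2 hbet)

lemma adl_lt_top {μs : ℕ → MD (ℕ ⊕ ℕ)} (hμs : P.RedSeq μs) : adl μs < ⊤ :=
  (ENNReal.tsum_coe_ne_top_iff_summable.2 (hP.summable_wt hμs)).lt_top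

lemma redSeq_countdown (m : ℕ) : P.RedSeq (countdown m) := by
  induction m with
  | zero => exact RedSeq.consSeq hP.step_terminal RedSeq.zero
  | succ m ih => exact RedSeq.consSeq (by simpa using hP.step_pred m) ih

lemma redSeq_gamble (n k : ℕ) : P.RedSeq (gamble n k) := by
  induction k generalizing n with
  | zero => exact RedSeq.consSeq (by simpa using hP.step_cashOut n) (hP.redSeq_countdown _)
  | succ k ih =>
    refine RedSeq.consSeq ?_ (RedSeq.smul_add_smul (by norm_num) (ih (n + 1))
      (hP.redSeq_countdown 0))
    simpa using hP.step_bet n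

lemma adh_eq_top : adh P (.inr 0) = ⊤ := by
  refine eq_top_iff.2 (ENNReal.iSup_natCast ▸ iSup_le fun k => ?_)
  calc (k : ℝ≥0∞) = ((2 ^ 0 * (0 + k) : ℕ) : ℝ≥0∞) := by simp
    _ ≤ adl (gamble 0 k) := le_adl_gamble 0 k
    _ ≤ adh P (.inr 0) :=
      le_iSup₂_of_le (gamble 0 k) ⟨gamble_zero 0 k, hP.redSeq_gamble 0 k⟩ le_rfl

end PARS.IsGambling

/-- a finitely branching PARS (over `ℕ ⊎ {a_n | n ∈ ℕ}`, with
`Sum.inl k` the number `k` and `Sum.inr n` the element `a_n`) that is PAST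
but not SAST: `adh(a_0) = ∞`. -/
theorem stmt_9 (P : PARS (ℕ ⊕ ℕ))
    (hP : ∀ (a : ℕ ⊕ ℕ) (d : FinDist (ℕ ⊕ ℕ)), P a d ↔
      (∃ n : ℕ, a = Sum.inr n ∧ ∀ y, d.w y =
        if y = Sum.inr (n + 1) then 1 / 2 else if y = Sum.inl 0 then 1 / 2 else 0) ∨
      (∃ n : ℕ, a = Sum.inr n ∧ ∀ y, d.w y =
        if y = Sum.inl (2 ^ n * n) then 1 else 0) ∨
      (∃ n : ℕ, a = Sum.inl (n + 1) ∧ ∀ y, d.w y =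
        if y = Sum.inl n then 1 else 0)) :
    (∀ (a : ℕ ⊕ ℕ) (μs : ℕ → MD (ℕ ⊕ ℕ)),
        P.RedSeqFrom {(1, a)} μs → adl μs < ⊤) ∧
    (∀ a : ℕ ⊕ ℕ, {d | P a d}.Finite) ∧
    ¬ P.SAST ∧ adh P (Sum.inr 0) = ⊤ := by
  have hP : P.IsGambling := hP
  refine ⟨fun _ _ hμs => hP.adl_lt_top hμs.2, hP.finite_setOf, fun hsast => ?_, hP.adh_eq_top⟩
  exact (hsast (.inr 0)).ne hP.adh_eq_top
end
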